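/- arXiv:2110.00164 — 2 statements merged into one kernel-verified Lean document; each statement's English description precedes it below -/
import Mathlib

section
/- Let S be a finite subset of ℤ, let i ∈ ℤ, and let w be a word of integers containing no letter equal to i+1. If i+1 ∈ S ⋆ (i w), then i ∈ S ⋆ (i w), where i w denotes the word whose first letter is i followed by w. -/
/-- `S ⋆ m`: replace the largest element of `S` that is `≤ m` by `m`,
or insert `m` if no such element exists. -/
def starOne (S : Finset ℤ) (m : ℤ) : Finset ℤ :=
  if h : (S.filter (fun x => x ≤ m)).Nonempty then
    insert m (S.erase ((S.filter (fun x => x ≤ m)).max' h))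
  else insert m S

/-- `S ⋆ w` for a word `w` of integers. -/
def starWord (S : Finset ℤ) (w : List ℤ) : Finset ℤ := w.foldl starOne S

/-!
Call `T` closed at `i` if `i + 1 ∈ T → i ∈ T`. The set `S ⋆ i` contains `i`, so it is closed
at `i`, and every letter `m ≠ i + 1` preserves closedness: if `i` and `i + 1` both lie in `T`,
then `T ⋆ m` can only lose `i` when `i` is the largest element `≤ m`, which forces `m = i`,
and then `i` is put back.
-/

section starOne

variable {S : Finset ℤ} {m x : ℤ}

theorem self_mem_starOne (S : Finset ℤ) (m : ℤ) : m ∈ starOne S m := by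
  unfold starOne
  split <;> exact Finset.mem_insert_self m _

theorem mem_of_mem_starOne (h : x ∈ starOne S m) (hx : x ≠ m) : x ∈ S := by
  unfold starOne at h
  split at h <;> simp_all

theorem mem_starOne_of_mem_of_ne_max' (hx : x ∈ S)
    (hmax : ∀ hne : (S.filter (· ≤ m)).Nonempty, x ≠ (S.filter (· ≤ m)).max' hne) :
    x ∈ starOne S m := by
  unfold starOne
  split
  case isTrue hne => exact Finset.mem_insert_of_mem (Finset.mem_erase.mpr ⟨hmax hne, hx⟩)
  case isFalse => exact Finset.mem_insert_of_mem hx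

theorem mem_starOne_of_mem_of_lt (hx : x ∈ S) (hmx : m < x) : x ∈ starOne S m := by
  refine mem_starOne_of_mem_of_ne_max' hx fun hne hmax => ?_
  have hle : (S.filter (· ≤ m)).max' hne ≤ m := (Finset.mem_filter.mp (Finset.max'_mem _ hne)).2
  omega

theorem mem_starOne_of_mem_of_lt_of_le {y : ℤ} (hx : x ∈ S) (hy : y ∈ S) (hxy : x < y)
    (hym : y ≤ m) : x ∈ starOne S m := by
  refine mem_starOne_of_mem_of_ne_max' hx fun hne hmax => ?_
  have hle : y ≤ (S.filter (· ≤ m)).max' hne :=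
    Finset.le_max' _ y (Finset.mem_filter.mpr ⟨hy, hym⟩)
  omega

theorem mem_starOne_of_succ_mem_starOne {i : ℤ} (hm : m ≠ i + 1) (hS : i + 1 ∈ S → i ∈ S)
    (h : i + 1 ∈ starOne S m) : i ∈ starOne S m := by
  have hsucc : i + 1 ∈ S := mem_of_mem_starOne h hm.symm
  have hi : i ∈ S := hS hsucc
  rcases lt_trichotomy m i with hmi | rfl | hmi
  · exact mem_starOne_of_mem_of_lt hi hmi
  · exact self_mem_starOne S m
  · exact mem_starOne_of_mem_of_lt_of_le hi hsucc (lt_add_one i) (by omega)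

end starOne

@[simp]
theorem starWord_cons (S : Finset ℤ) (a : ℤ) (w : List ℤ) :
    starWord S (a :: w) = starWord (starOne S a) w :=
  rfl

theorem mem_starWord_of_succ_mem_starWord {i : ℤ} {w : List ℤ} (hw : i + 1 ∉ w) {S : Finset ℤ}
    (hS : i + 1 ∈ S → i ∈ S) (h : i + 1 ∈ starWord S w) : i ∈ starWord S w := by
  induction w generalizing S with
  | nil => exact hS h
  | cons a w ih =>
    rw [List.mem_cons, not_or] at hw
    exact ih hw.2 (mem_starOne_of_succ_mem_starOne (Ne.symm hw.1) hS) h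

/-- **Lemma.** Let `S` be a finite subset of `ℤ`, let `i ∈ ℤ`, and let `w` be
a word of integers containing no letter equal to `i+1`.  If
`i+1 ∈ S ⋆ (i·w)`, then `i ∈ S ⋆ (i·w)`. -/
theorem mem_of_succ_mem_starWord (S : Finset ℤ) (i : ℤ) (w : List ℤ)
    (hw : (i + 1) ∉ w) (h : i + 1 ∈ starWord S (i :: w)) :
    i ∈ starWord S (i :: w) := by
  rw [starWord_cons] at h ⊢
  exact mem_starWord_of_succ_mem_starWord hw (fun _ => self_mem_starOne S i) h
end

section
/- Let S_1 be a finite subset of ℤ such that ∂_i S_1 is defined, and set S_2 = ∂_i S_1. Then: (1) for any integer x with x ≠ i and x ≠ i+1, the set S_2 ⋆ x equals S_1 ⋆ x or equals ∂_i(S_1 ⋆ x); (2) S_2 ⋆ (i+1) = S_1 ⋆ (i+1). -/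
/-- `∂_i S`: if `i ∈ S` and `i+1 ∉ S`, replace `i` by `i+1`; if both or
neither of `i, i+1` lie in `S`, do nothing.  (The remaining case,
`i ∉ S` and `i+1 ∈ S`, is the undefined one.) -/
def dSet (i : ℤ) (S : Finset ℤ) : Finset ℤ :=
  if i ∈ S ∧ i + 1 ∉ S then insert (i + 1) (S.erase i) else S

/-! The proof tracks the element of `S₁` that `⋆ x` replaces, i.e. the greatest element
of `S₁` below `x`. If it is `i` (and `x ≥ i + 1`), then in `∂_i S₁` it becomes `i + 1`,
which `⋆ x` removes again, so `∂_i S₁ ⋆ x = S₁ ⋆ x`. Otherwise the replaced element,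
like `x`, avoids `i` and `i + 1`, so `⋆ x` acts the same way on both sets and commutes
with `∂_i`. -/

section starOne

variable {S : Finset ℤ} {m a : ℤ}

lemma starOne_of_isGreatest (h : IsGreatest {b | b ∈ S ∧ b ≤ m} a) :
    starOne S m = insert m (S.erase a) := by
  have hne : (S.filter (· ≤ m)).Nonempty := ⟨a, Finset.mem_filter.2 h.1⟩
  have hmax : (S.filter (· ≤ m)).max' hne = a :=
    (Finset.isGreatest_max' _ hne).unique (by simpa only [Finset.coe_filter] using h)
  rw [starOne, dif_pos hne, hmax]

lemma starOne_of_forall_lt (h : ∀ b ∈ S, m < b) : starOne S m = insert m S := by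
  have hne : ¬ (S.filter (· ≤ m)).Nonempty := by
    rintro ⟨b, hb⟩
    rw [Finset.mem_filter] at hb
    exact (h b hb.1).not_ge hb.2
  rw [starOne, dif_neg hne]

lemma exists_isGreatest_or_forall_lt (S : Finset ℤ) (m : ℤ) :
    (∃ a, IsGreatest {b | b ∈ S ∧ b ≤ m} a) ∨ ∀ b ∈ S, m < b := by
  by_cases hne : (S.filter (· ≤ m)).Nonempty
  · left
    exact ⟨_, by simpa only [Finset.coe_filter] using Finset.isGreatest_max' _ hne⟩
  · right
    intro b hb
    by_contra! hbm
    exact hne ⟨b, Finset.mem_filter.2 ⟨hb, hbm⟩⟩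

end starOne

section dSet

variable {i x : ℤ} {S : Finset ℤ}

lemma dSet_of_mem_of_not_mem (hi : i ∈ S) (hi1 : i + 1 ∉ S) :
    dSet i S = insert (i + 1) (S.erase i) :=
  if_pos ⟨hi, hi1⟩

lemma dSet_insert_of_ne (hx : x ≠ i) (hx1 : x ≠ i + 1) :
    dSet i (insert x S) = insert x (dSet i S) := by
  have hiff : (i ∈ insert x S ∧ i + 1 ∉ insert x S) ↔ (i ∈ S ∧ i + 1 ∉ S) := by
    simp only [Finset.mem_insert, hx.symm, hx1.symm, false_or]
  simp only [dSet, hiff]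
  split_ifs
  · rw [Finset.erase_insert_of_ne hx, Finset.insert_comm]
  · rfl

lemma dSet_erase_of_ne (hx : x ≠ i) (hx1 : x ≠ i + 1) :
    dSet i (S.erase x) = (dSet i S).erase x := by
  have hiff : (i ∈ S.erase x ∧ i + 1 ∉ S.erase x) ↔ (i ∈ S ∧ i + 1 ∉ S) := by
    simp only [Finset.mem_erase, ne_eq, hx.symm, hx1.symm, not_false_eq_true, true_and]
  simp only [dSet, hiff]
  split_ifs
  · rw [Finset.erase_insert_of_ne (Ne.symm hx1), Finset.erase_right_comm]
  · rfl

end dSet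

section shift

variable {i x a : ℤ} {S : Finset ℤ}

lemma mem_dSet_of_mem_of_not_mem (hi : i ∈ S) (hi1 : i + 1 ∉ S) {b : ℤ} :
    b ∈ dSet i S ↔ b = i + 1 ∨ b ≠ i ∧ b ∈ S := by
  rw [dSet_of_mem_of_not_mem hi hi1, Finset.mem_insert, Finset.mem_erase]

lemma starOne_dSet_of_isGreatest_self (hi1 : i + 1 ∉ S)
    (h : IsGreatest {b | b ∈ S ∧ b ≤ x} i) (hx : i < x) :
    starOne (dSet i S) x = starOne S x := by
  have hT : IsGreatest {b | b ∈ dSet i S ∧ b ≤ x} (i + 1) := by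
    refine ⟨⟨(mem_dSet_of_mem_of_not_mem h.1.1 hi1).2 (Or.inl rfl), hx⟩, ?_⟩
    rintro b ⟨hb, hbx⟩
    rcases (mem_dSet_of_mem_of_not_mem h.1.1 hi1).1 hb with rfl | ⟨-, hb⟩
    · exact le_rfl
    · exact (h.2 ⟨hb, hbx⟩).trans (le_add_of_nonneg_right zero_le_one)
  rw [starOne_of_isGreatest hT, starOne_of_isGreatest h, dSet_of_mem_of_not_mem h.1.1 hi1,
    Finset.erase_insert fun hi1' => hi1 (Finset.mem_of_mem_erase hi1')]

lemma starOne_dSet_of_isGreatest_of_ne (hi : i ∈ S) (hi1 : i + 1 ∉ S)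
    (h : IsGreatest {b | b ∈ S ∧ b ≤ x} a) (ha : a ≠ i) (hx : x ≠ i) (hx1 : x ≠ i + 1) :
    starOne (dSet i S) x = dSet i (starOne S x) := by
  have ha1 : a ≠ i + 1 := fun ha1 => hi1 (ha1 ▸ h.1.1)
  have hT : IsGreatest {b | b ∈ dSet i S ∧ b ≤ x} a := by
    refine ⟨⟨(mem_dSet_of_mem_of_not_mem hi hi1).2 (Or.inr ⟨ha, h.1.1⟩), h.1.2⟩, ?_⟩
    rintro b ⟨hb, hbx⟩
    rcases (mem_dSet_of_mem_of_not_mem hi hi1).1 hb with rfl | ⟨-, hb⟩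
    · have : i ≤ a := h.2 ⟨hi, by omega⟩
      omega
    · exact h.2 ⟨hb, hbx⟩
  rw [starOne_of_isGreatest hT, starOne_of_isGreatest h, dSet_insert_of_ne hx hx1,
    dSet_erase_of_ne ha ha1]

lemma starOne_dSet_of_forall_lt (hi : i ∈ S) (hi1 : i + 1 ∉ S) (h : ∀ b ∈ S, x < b) :
    starOne (dSet i S) x = dSet i (starOne S x) := by
  have hxi : x < i := h i hi
  have hT : ∀ b ∈ dSet i S, x < b := by
    intro b hb
    rcases (mem_dSet_of_mem_of_not_mem hi hi1).1 hb with rfl | ⟨-, hb⟩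
    · omega
    · exact h b hb
  rw [starOne_of_forall_lt hT, starOne_of_forall_lt h, dSet_insert_of_ne (by omega) (by omega)]

end shift

theorem star_of_dSet_general (i : ℤ) (S₁ : Finset ℤ) :
    (∀ x : ℤ, x ≠ i → x ≠ i + 1 →
      starOne (dSet i S₁) x = starOne S₁ x ∨
      starOne (dSet i S₁) x = dSet i (starOne S₁ x)) ∧
    starOne (dSet i S₁) (i + 1) = starOne S₁ (i + 1) := by
  by_cases hS : i ∈ S₁ ∧ i + 1 ∉ S₁
  swap
  · rw [show dSet i S₁ = S₁ from if_neg hS]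
    exact ⟨fun _ _ _ => Or.inl rfl, rfl⟩
  obtain ⟨hi, hi1⟩ := hS
  refine ⟨fun x hx hx1 => ?_, ?_⟩
  · rcases exists_isGreatest_or_forall_lt S₁ x with ⟨a, ha⟩ | hlt
    · obtain rfl | hai := eq_or_ne a i
      · exact Or.inl (starOne_dSet_of_isGreatest_self hi1 ha (ha.1.2.lt_of_ne hx.symm))
      · exact Or.inr (starOne_dSet_of_isGreatest_of_ne hi hi1 ha hai hx hx1)
    · exact Or.inr (starOne_dSet_of_forall_lt hi hi1 hlt)
  · refine starOne_dSet_of_isGreatest_self hi1 ⟨⟨hi, by omega⟩, ?_⟩ (lt_add_one i)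
    rintro b ⟨hb, hbx⟩
    have : b ≠ i + 1 := fun hb1 => hi1 (hb1 ▸ hb)
    omega

/-- **Lemma.** Let `S₁` be a finite subset of `ℤ` such that `∂_i S₁` is
defined (i.e. not: `i ∉ S₁` and `i+1 ∈ S₁`), and set `S₂ = ∂_i S₁`.  Then
(1) for any integer `x ∉ {i, i+1}`, the set `S₂ ⋆ x` equals `S₁ ⋆ x` or
`∂_i (S₁ ⋆ x)`; and (2) `S₂ ⋆ (i+1) = S₁ ⋆ (i+1)`. -/
theorem star_of_dSet (i : ℤ) (S₁ : Finset ℤ) (hdef : ¬ (i ∉ S₁ ∧ i + 1 ∈ S₁)) :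
    (∀ x : ℤ, x ≠ i → x ≠ i + 1 →
      starOne (dSet i S₁) x = starOne S₁ x ∨
      starOne (dSet i S₁) x = dSet i (starOne S₁ x)) ∧
    starOne (dSet i S₁) (i + 1) = starOne S₁ (i + 1) :=
  star_of_dSet_general i S₁
end
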